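/- arXiv:1403.3593 — 2 statements merged into one kernel-verified Lean document; each statement's English description precedes it below -/
import Mathlib

section
/- Let X_n, X be real-valued random variables on a probability space. If E[F(X_n)] → E[F(X)] for every continuous, bounded, monotone increasing function F: ℝ → ℝ, then X_n converges to X in distribution. -/
/-!
Ramps at `±R` are monotone, so the hypothesis controls the tails of the laws of `X n` uniformly.
On the window `[-(R+1), R+1]` a bounded `K`-Lipschitz function `f` is the difference of the
monotone functions `f + K • id` and `K • id`, so its integrals converge once `f` is clamped to
the window, and the tails bound the error of clamping. Convergence of the integrals of bounded
Lipschitz functions is weak convergence.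
-/

open MeasureTheory Filter Topology NNReal

theorem tendsto_of_forall_approx {α ι : Type*} [PseudoMetricSpace α] {l : Filter ι}
    {a : ι → α} {b : α}
    (h : ∀ ε > 0, ∃ (a' : ι → α) (b' : α),
      Tendsto a' l (𝓝 b') ∧ (∀ᶠ i in l, dist (a i) (a' i) < ε) ∧ dist b' b < ε) :
    Tendsto a l (𝓝 b) := by
  refine Metric.tendsto_nhds.2 fun ε hε => ?_
  obtain ⟨a', b', ha', hclose, hb'⟩ := h (ε / 3) (by positivity)
  filter_upwards [hclose, Metric.tendsto_nhds.1 ha' (ε / 3) (by positivity)] with i h₁ h₂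
  calc dist (a i) b ≤ dist (a i) (a' i) + dist (a' i) b' + dist b' b := dist_triangle4 _ _ _ _
    _ < ε := by linarith

theorem Continuous.integrable_of_forall_abs_le {α : Type*} [TopologicalSpace α]
    [MeasurableSpace α] [OpensMeasurableSpace α] {μ : Measure α} [IsFiniteMeasure μ] {f : α → ℝ}
    (hf : Continuous f) {C : ℝ} (hC : ∀ x, |f x| ≤ C) : Integrable f μ :=
  .of_bound hf.aestronglyMeasurable C (.of_forall hC)

theorem LipschitzWith.monotone_add_mul {f : ℝ → ℝ} {K : ℝ≥0} (hf : LipschitzWith K f) :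
    Monotone fun x => f x + K * x := by
  intro x y hxy
  have h := (abs_sub_le_iff.1 (hf.dist_le_mul x y)).1
  rw [Real.dist_eq, abs_of_nonpos (sub_nonpos.2 hxy)] at h
  linarith

noncomputable def ramp (a x : ℝ) : ℝ := max 0 (min 1 (x - a))

lemma monotone_ramp (a : ℝ) : Monotone (ramp a) :=
  monotone_const.max (monotone_const.min fun _ _ hxy => sub_le_sub_right hxy a)

lemma continuous_ramp (a : ℝ) : Continuous (ramp a) := by
  unfold ramp; fun_prop

lemma ramp_nonneg (a x : ℝ) : 0 ≤ ramp a x := le_max_left _ _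

lemma abs_ramp_le_one (a x : ℝ) : |ramp a x| ≤ 1 := by
  rw [abs_of_nonneg (ramp_nonneg a x)]
  exact max_le zero_le_one (min_le_left _ _)

lemma ramp_eq_zero {a x : ℝ} (h : x ≤ a) : ramp a x = 0 :=
  max_eq_left ((min_le_right _ _).trans (by linarith))

lemma ramp_eq_one {a x : ℝ} (h : a + 1 ≤ x) : ramp a x = 1 := by
  rw [ramp, min_eq_left (by linarith), max_eq_right zero_le_one]

noncomputable def tailBump (R x : ℝ) : ℝ := ramp R x + ramp R (-x)

lemma continuous_tailBump (R : ℝ) : Continuous (tailBump R) :=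
  (continuous_ramp R).add ((continuous_ramp R).comp continuous_neg)

lemma tailBump_nonneg (R x : ℝ) : 0 ≤ tailBump R x :=
  add_nonneg (ramp_nonneg _ _) (ramp_nonneg _ _)

lemma abs_tailBump_le_two (R x : ℝ) : |tailBump R x| ≤ 2 := by
  rw [abs_of_nonneg (tailBump_nonneg R x), tailBump]
  linarith [(abs_le.1 (abs_ramp_le_one R x)).2, (abs_le.1 (abs_ramp_le_one R (-x))).2]

lemma tailBump_eq_zero {R x : ℝ} (h : |x| ≤ R) : tailBump R x = 0 := by
  obtain ⟨h₁, h₂⟩ := abs_le.1 h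
  rw [tailBump, ramp_eq_zero h₂, ramp_eq_zero (by linarith), add_zero]

lemma one_le_tailBump {R x : ℝ} (h : R + 1 ≤ |x|) : 1 ≤ tailBump R x := by
  rcases abs_cases x with ⟨hx, -⟩ | ⟨hx, -⟩
  · rw [tailBump, ramp_eq_one (by linarith)]
    linarith [ramp_nonneg R (-x)]
  · rw [tailBump, ramp_eq_one (x := -x) (by linarith)]
    linarith [ramp_nonneg R x]

noncomputable def clampAt (R x : ℝ) : ℝ := max (-R) (min R x)

lemma monotone_clampAt (R : ℝ) : Monotone (clampAt R) :=
  monotone_const.max (monotone_const.min monotone_id)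

lemma continuous_clampAt (R : ℝ) : Continuous (clampAt R) := by
  unfold clampAt; fun_prop

lemma abs_clampAt_le (R x : ℝ) : |clampAt R x| ≤ |R| :=
  abs_le.2 ⟨le_max_of_le_left (neg_le_neg (le_abs_self R)),
    max_le (neg_le_abs R) ((min_le_left _ _).trans (le_abs_self R))⟩

lemma clampAt_eq_self {R x : ℝ} (h : |x| ≤ R) : clampAt R x = x := by
  obtain ⟨h₁, h₂⟩ := abs_le.1 h
  rw [clampAt, min_eq_right h₂, max_eq_right h₁]

lemma abs_sub_comp_clampAt_le {f : ℝ → ℝ} {C : ℝ} (hC : ∀ x, |f x| ≤ C) (R x : ℝ) :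
    |f x - f (clampAt (R + 1) x)| ≤ 2 * C * tailBump R x := by
  have hC₀ : 0 ≤ C := (abs_nonneg _).trans (hC 0)
  by_cases hx : |x| ≤ R + 1
  · rw [clampAt_eq_self hx, sub_self, abs_zero]
    exact mul_nonneg (by linarith) (tailBump_nonneg R x)
  · calc |f x - f (clampAt (R + 1) x)| ≤ |f x| + |f (clampAt (R + 1) x)| := abs_sub _ _
      _ ≤ 2 * C := by linarith [hC x, hC (clampAt (R + 1) x)]
      _ ≤ 2 * C * tailBump R x :=
        le_mul_of_one_le_right (by linarith) (one_le_tailBump (not_le.1 hx).le)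

lemma dist_integral_comp_clampAt_le (μ : Measure ℝ) [IsFiniteMeasure μ] {f : ℝ → ℝ}
    (hf : Continuous f) {C : ℝ} (hC : ∀ x, |f x| ≤ C) (R : ℝ) :
    dist (∫ x, f x ∂μ) (∫ x, f (clampAt (R + 1) x) ∂μ) ≤ 2 * C * ∫ x, tailBump R x ∂μ := by
  rw [Real.dist_eq, ← integral_sub (hf.integrable_of_forall_abs_le hC)
    (g := fun x => f (clampAt (R + 1) x))
      ((hf.comp (continuous_clampAt _)).integrable_of_forall_abs_le fun x => hC _),
    ← integral_const_mul]
  exact norm_integral_le_of_norm_le (f := fun x => f x - f (clampAt (R + 1) x))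
    (((continuous_tailBump R).integrable_of_forall_abs_le (abs_tailBump_le_two R)).const_mul _)
    (.of_forall (abs_sub_comp_clampAt_le hC R))

lemma tendsto_integral_tailBump_atTop (μ : Measure ℝ) [IsFiniteMeasure μ] :
    Tendsto (fun R => ∫ x, tailBump R x ∂μ) atTop (𝓝 0) := by
  have h := tendsto_integral_filter_of_dominated_convergence (μ := μ) (l := atTop)
    (F := fun R x => tailBump R x) (f := 0) (fun _ => 2)
    (.of_forall fun R => (continuous_tailBump R).aestronglyMeasurable)
    (.of_forall fun R => .of_forall (abs_tailBump_le_two R)) (integrable_const 2)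
    (.of_forall fun x => tendsto_const_nhds.congr'
      (eventually_ge_atTop |x| |>.mono fun R hR => (tailBump_eq_zero hR).symm))
  simpa using h

section MonotoneTestFunctions

variable {ι : Type*} {l : Filter ι} {μs : ι → ProbabilityMeasure ℝ} {μ : ProbabilityMeasure ℝ}

lemma tendsto_integral_sub_of_monotone
    (hmono : ∀ F : ℝ → ℝ, Continuous F → (∃ C, ∀ x, |F x| ≤ C) → Monotone F →
      Tendsto (fun i => ∫ x, F x ∂(μs i)) l (𝓝 (∫ x, F x ∂μ)))
    {g₁ g₂ : ℝ → ℝ} (hg₁ : Continuous g₁) (hg₁C : ∃ C, ∀ x, |g₁ x| ≤ C) (hg₁m : Monotone g₁)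
    (hg₂ : Continuous g₂) (hg₂C : ∃ C, ∀ x, |g₂ x| ≤ C) (hg₂m : Monotone g₂) :
    Tendsto (fun i => ∫ x, g₁ x - g₂ x ∂(μs i)) l (𝓝 (∫ x, g₁ x - g₂ x ∂μ)) := by
  obtain ⟨C₁, hC₁⟩ := hg₁C
  obtain ⟨C₂, hC₂⟩ := hg₂C
  have hsplit (ν : ProbabilityMeasure ℝ) :
      ∫ x, g₁ x - g₂ x ∂ν = ∫ x, g₁ x ∂ν - ∫ x, g₂ x ∂ν :=
    integral_sub (hg₁.integrable_of_forall_abs_le hC₁) (hg₂.integrable_of_forall_abs_le hC₂)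
  simp only [hsplit]
  exact (hmono g₁ hg₁ ⟨C₁, hC₁⟩ hg₁m).sub (hmono g₂ hg₂ ⟨C₂, hC₂⟩ hg₂m)

lemma tendsto_integral_tailBump
    (hmono : ∀ F : ℝ → ℝ, Continuous F → (∃ C, ∀ x, |F x| ≤ C) → Monotone F →
      Tendsto (fun i => ∫ x, F x ∂(μs i)) l (𝓝 (∫ x, F x ∂μ))) (R : ℝ) :
    Tendsto (fun i => ∫ x, tailBump R x ∂(μs i)) l (𝓝 (∫ x, tailBump R x ∂μ)) := by
  have h := tendsto_integral_sub_of_monotone hmono (g₂ := fun x => -ramp R (-x))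
    (continuous_ramp R) ⟨1, abs_ramp_le_one R⟩ (monotone_ramp R)
    ((continuous_ramp R).comp continuous_neg).neg
    ⟨1, fun x => by simpa using abs_ramp_le_one R (-x)⟩
    fun x y hxy => neg_le_neg (monotone_ramp R (neg_le_neg hxy))
  simpa only [sub_neg_eq_add, tailBump] using h

lemma tendsto_integral_comp_clampAt
    (hmono : ∀ F : ℝ → ℝ, Continuous F → (∃ C, ∀ x, |F x| ≤ C) → Monotone F →
      Tendsto (fun i => ∫ x, F x ∂(μs i)) l (𝓝 (∫ x, F x ∂μ)))
    {f : ℝ → ℝ} {K : ℝ≥0} (hf : LipschitzWith K f) {C : ℝ} (hC : ∀ x, |f x| ≤ C) (R : ℝ) :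
    Tendsto (fun i => ∫ x, f (clampAt R x) ∂(μs i)) l (𝓝 (∫ x, f (clampAt R x) ∂μ)) := by
  have hlin (x : ℝ) : |(K : ℝ) * clampAt R x| ≤ K * |R| := by
    rw [abs_mul, NNReal.abs_eq]
    exact mul_le_mul_of_nonneg_left (abs_clampAt_le R x) K.coe_nonneg
  have h := tendsto_integral_sub_of_monotone hmono
    (g₁ := fun x => f (clampAt R x) + K * clampAt R x) (g₂ := fun x => K * clampAt R x)
    (by have := continuous_clampAt R; have := hf.continuous; fun_prop)
    ⟨C + K * |R|, fun x => (abs_add_le _ _).trans (add_le_add (hC _) (hlin x))⟩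
    (hf.monotone_add_mul.comp (monotone_clampAt R))
    (by have := continuous_clampAt R; fun_prop) ⟨_, hlin⟩
    ((monotone_clampAt R).const_mul K.coe_nonneg)
  simpa only [add_sub_cancel_right] using h

lemma tendsto_integral_of_lipschitzWith
    (hmono : ∀ F : ℝ → ℝ, Continuous F → (∃ C, ∀ x, |F x| ≤ C) → Monotone F →
      Tendsto (fun i => ∫ x, F x ∂(μs i)) l (𝓝 (∫ x, F x ∂μ)))
    {f : ℝ → ℝ} {K : ℝ≥0} (hf : LipschitzWith K f) {C : ℝ} (hC : ∀ x, |f x| ≤ C) :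
    Tendsto (fun i => ∫ x, f x ∂(μs i)) l (𝓝 (∫ x, f x ∂μ)) := by
  refine tendsto_of_forall_approx fun ε hε => ?_
  have htail := (tendsto_integral_tailBump_atTop (μ : Measure ℝ)).const_mul (2 * C)
  rw [mul_zero] at htail
  obtain ⟨R, hR⟩ := (htail.eventually_lt_const hε).exists
  refine ⟨_, _, tendsto_integral_comp_clampAt hmono hf hC (R + 1), ?_,
    (dist_comm _ _).trans_lt ((dist_integral_comp_clampAt_le _ hf.continuous hC R).trans_lt hR)⟩
  filter_upwards [((tendsto_integral_tailBump hmono R).const_mul (2 * C)).eventually_lt_const hR]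
    with i hi
  exact (dist_integral_comp_clampAt_le _ hf.continuous hC R).trans_lt hi

theorem ProbabilityMeasure.tendsto_of_forall_monotone_integral_tendsto [l.IsCountablyGenerated]
    (hmono : ∀ F : ℝ → ℝ, Continuous F → (∃ C, ∀ x, |F x| ≤ C) → Monotone F →
      Tendsto (fun i => ∫ x, F x ∂(μs i)) l (𝓝 (∫ x, F x ∂μ))) :
    Tendsto μs l (𝓝 μ) := by
  refine tendsto_iff_forall_lipschitz_integral_tendsto.2 fun f hfb ⟨K, hf⟩ => ?_
  obtain ⟨C, hC⟩ := isBounded_iff_forall_norm_le.1 (Metric.isBounded_range_iff.2 hfb)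
  exact tendsto_integral_of_lipschitzWith hmono hf fun x => hC _ ⟨x, rfl⟩

end MonotoneTestFunctions

theorem stmt7 {Ω : Type*} [MeasurableSpace Ω] (P : Measure Ω) [IsProbabilityMeasure P]
    (X : ℕ → Ω → ℝ) (Y : Ω → ℝ)
    (hX : ∀ n, Measurable (X n)) (hY : Measurable Y)
    (h : ∀ F : ℝ → ℝ, Continuous F → (∃ C, ∀ x, |F x| ≤ C) → Monotone F →
      Filter.Tendsto (fun n => ∫ ω, F (X n ω) ∂P) Filter.atTop (nhds (∫ ω, F (Y ω) ∂P))) :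
    ∀ G : ℝ → ℝ, Continuous G → (∃ C, ∀ x, |G x| ≤ C) →
      Filter.Tendsto (fun n => ∫ ω, G (X n ω) ∂P) Filter.atTop (nhds (∫ ω, G (Y ω) ∂P)) := by
  intro G hG ⟨C, hC⟩
  let law (Z : Ω → ℝ) (hZ : Measurable Z) : ProbabilityMeasure ℝ :=
    ⟨P.map Z, Measure.isProbabilityMeasure_map hZ.aemeasurable⟩
  have integral_law {F : ℝ → ℝ} (hF : Continuous F) {Z : Ω → ℝ} (hZ : Measurable Z) :
      ∫ x, F x ∂(law Z hZ) = ∫ ω, F (Z ω) ∂P :=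
    integral_map hZ.aemeasurable hF.aestronglyMeasurable
  have hweak : Tendsto (fun n => law (X n) (hX n)) atTop (𝓝 (law Y hY)) :=
    ProbabilityMeasure.tendsto_of_forall_monotone_integral_tendsto fun F hF hFC hFm => by
      simpa only [integral_law hF] using h F hF hFC hFm
  have hG' := ProbabilityMeasure.tendsto_iff_forall_integral_tendsto.1 hweak
    (BoundedContinuousFunction.ofNormedAddCommGroup G hG C hC)
  simpa only [BoundedContinuousFunction.coe_ofNormedAddCommGroup, integral_law hG] using hG'
end

section
/- Let 𝒳 be a separable Banach space, X_n, X be 𝒳-valued random variables with X_n ⇒ X (weak convergence), and suppose for every ε > 0 there is a compact K ⊆ 𝒳 with P(X_n ∉ K) ≤ ε for all n. Let F_n, F: 𝒳 → ℝ be continuous with F_n → F uniformly on every compact subset of 𝒳. Then F_n(X_n) ⇒ F(X). -/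
/-!
Write `E G(Fₙ(Xₙ)) - E G(F(X))` as `E[G(Fₙ(Xₙ)) - G(F(Xₙ))] + (E G(F(Xₙ)) - E G(F(X)))`. The second
term tends to `0` by weak convergence, `G ∘ F` being bounded and continuous. For the first, pick a
compact `K` with `P(Xₙ ∉ K) ≤ δ` for all `n`: `G` is uniformly continuous on the compact
`1`-thickening of `F(K)`, so `G ∘ Fₙ → G ∘ F` uniformly on `K`, while off `K` the integrand is
bounded by `2 sup |G|`.
-/

open MeasureTheory Filter Topology TopologicalSpace

theorem Continuous.comp_tendstoUniformlyOn_of_isCompact {ι α β γ : Type*} [TopologicalSpace α]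
    [PseudoMetricSpace β] [ProperSpace β] [UniformSpace γ] {p : Filter ι} {F : ι → α → β}
    {f : α → β} {g : β → γ} {K : Set α} (hg : Continuous g) (hK : IsCompact K)
    (hf : ContinuousOn f K) (h : TendstoUniformlyOn F f p K) :
    TendstoUniformlyOn (fun i x ↦ g (F i x)) (fun x ↦ g (f x)) p K := by
  set L := Metric.cthickening 1 (f '' K)
  have hfL : ∀ x ∈ K, f x ∈ L := fun x hx ↦
    Metric.self_subset_cthickening _ (Set.mem_image_of_mem f hx)
  have hFL : ∀ᶠ i in p, ∀ x ∈ K, F i x ∈ L := by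
    filter_upwards [Metric.tendstoUniformlyOn_iff.mp h 1 one_pos] with i hi x hx
    exact Metric.mem_cthickening_of_dist_le _ _ _ _ (Set.mem_image_of_mem f hx)
      (by rw [dist_comm]; exact (hi x hx).le)
  exact ((hK.image_of_continuousOn hf).cthickening.uniformContinuousOn_of_continuous
    hg.continuousOn).comp_tendstoUniformlyOn_eventually hFL hfL h

theorem norm_integral_le_add_measureReal_mul {Ω E : Type*} [MeasurableSpace Ω]
    [NormedAddCommGroup E] [NormedSpace ℝ E] {μ : Measure Ω} [IsProbabilityMeasure μ]
    {h : Ω → E} {S : Set Ω} {η C : ℝ} (hS : MeasurableSet S) (hη : 0 ≤ η)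
    (h_off : ∀ ω ∉ S, ‖h ω‖ ≤ η) (h_on : ∀ ω ∈ S, ‖h ω‖ ≤ C) :
    ‖∫ ω, h ω ∂μ‖ ≤ η + μ.real S * C := by
  have hbound : ∀ ω, ‖h ω‖ ≤ η + S.indicator (fun _ ↦ C) ω := by
    intro ω
    by_cases hω : ω ∈ S
    · simpa [hω] using (h_on ω hω).trans (le_add_of_nonneg_left hη)
    · simpa [hω] using h_off ω hω
  have hint : Integrable (fun ω ↦ η + S.indicator (fun _ ↦ C) ω) μ :=
    (integrable_const η).add ((integrable_const C).indicator hS)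
  calc ‖∫ ω, h ω ∂μ‖ ≤ ∫ ω, (η + S.indicator (fun _ ↦ C) ω) ∂μ :=
        norm_integral_le_of_norm_le hint (.of_forall hbound)
    _ = η + μ.real S * C := by
        rw [integral_add (integrable_const η) ((integrable_const C).indicator hS),
          integral_const, integral_indicator_const C hS]
        simp

theorem tendsto_integral_sub_of_tendstoUniformlyOn_of_tight {Ω α E : Type*}
    [MeasurableSpace Ω] {P : Measure Ω} [IsProbabilityMeasure P]
    [TopologicalSpace α] [T2Space α] [MeasurableSpace α] [OpensMeasurableSpace α]
    [NormedAddCommGroup E] [NormedSpace ℝ E] [SecondCountableTopology E]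
    {X : ℕ → Ω → α} (hX : ∀ n, Measurable (X n))
    (htight : ∀ ε > (0 : ℝ), ∃ K : Set α, IsCompact K ∧ ∀ n, (P {ω | X n ω ∉ K}).toReal ≤ ε)
    {H : ℕ → α → E} {h : α → E} (hH : ∀ n, Continuous (H n)) (hh : Continuous h)
    {C : ℝ} (hHC : ∀ n x, ‖H n x‖ ≤ C) (hhC : ∀ x, ‖h x‖ ≤ C)
    (hconv : ∀ K : Set α, IsCompact K → TendstoUniformlyOn H h atTop K) :
    Tendsto (fun n ↦ ∫ ω, H n (X n ω) ∂P - ∫ ω, h (X n ω) ∂P) atTop (𝓝 0) := by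
  obtain ⟨ω₀⟩ := nonempty_of_isProbabilityMeasure P
  have hC : 0 ≤ C := (norm_nonneg _).trans (hhC (X 0 ω₀))
  have hint : ∀ n {u : α → E}, Continuous u → (∀ x, ‖u x‖ ≤ C) →
      Integrable (fun ω ↦ u (X n ω)) P := fun n u hu huC ↦
    .of_bound (hu.stronglyMeasurable.comp_measurable (hX n)).aestronglyMeasurable C
      (.of_forall fun ω ↦ huC _)
  rw [NormedAddGroup.tendsto_nhds_zero]
  intro ε hε
  set δ := ε / (4 * (C + 1))
  obtain ⟨K, hK, hKP⟩ := htight δ (by positivity)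
  filter_upwards [Metric.tendstoUniformlyOn_iff.mp (hconv K hK) (ε / 4) (by positivity)]
    with n hn
  set S := {ω | X n ω ∉ K}
  have hS : MeasurableSet S := hX n hK.isClosed.measurableSet.compl
  have h_off : ∀ ω ∉ S, ‖H n (X n ω) - h (X n ω)‖ ≤ ε / 4 := fun ω hω ↦ by
    rw [← dist_eq_norm, dist_comm]
    exact (hn _ (not_not.mp hω)).le
  have h_on : ∀ ω ∈ S, ‖H n (X n ω) - h (X n ω)‖ ≤ 2 * C := fun ω _ ↦
    (norm_sub_le _ _).trans (by linarith [hHC n (X n ω), hhC (X n ω)])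
  have hPS : P.real S * (2 * C) ≤ ε / 2 := calc
    P.real S * (2 * C) ≤ δ * (2 * (C + 1)) := by
      gcongr
      · exact hKP n
      · linarith
    _ = ε / 2 := by simp only [δ]; field_simp; ring
  calc ‖∫ ω, H n (X n ω) ∂P - ∫ ω, h (X n ω) ∂P‖
      = ‖∫ ω, (H n (X n ω) - h (X n ω)) ∂P‖ := by
        rw [integral_sub (hint n (hH n) (hHC n)) (hint n hh hhC)]
    _ ≤ ε / 4 + P.real S * (2 * C) :=
        norm_integral_le_add_measureReal_mul hS (by positivity) h_off h_on
    _ < ε := by linarith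

theorem stmt8_general {Ω : Type*} [MeasurableSpace Ω] (P : Measure Ω) [IsProbabilityMeasure P]
    {𝒳 : Type*} [NormedAddCommGroup 𝒳]
    [MeasurableSpace 𝒳] [BorelSpace 𝒳]
    (X : ℕ → Ω → 𝒳) (Y : Ω → 𝒳)
    (hX : ∀ n, Measurable (X n))
    (hweak : ∀ G : 𝒳 → ℝ, Continuous G → (∃ C, ∀ x, |G x| ≤ C) →
      Filter.Tendsto (fun n => ∫ ω, G (X n ω) ∂P) Filter.atTop (nhds (∫ ω, G (Y ω) ∂P)))
    (htight : ∀ ε > (0 : ℝ), ∃ K : Set 𝒳, IsCompact K ∧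
      ∀ n, (P {ω | X n ω ∉ K}).toReal ≤ ε)
    (F : ℕ → 𝒳 → ℝ) (Flim : 𝒳 → ℝ)
    (hFn : ∀ n, Continuous (F n)) (hF : Continuous Flim)
    (hconv : ∀ K : Set 𝒳, IsCompact K → TendstoUniformlyOn F Flim Filter.atTop K) :
    ∀ G : ℝ → ℝ, Continuous G → (∃ C, ∀ x, |G x| ≤ C) →
      Filter.Tendsto (fun n => ∫ ω, G (F n (X n ω)) ∂P) Filter.atTop
        (nhds (∫ ω, G (Flim (Y ω)) ∂P)) := by
  rintro G hG ⟨C, hC⟩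
  have hdiff := tendsto_integral_sub_of_tendstoUniformlyOn_of_tight hX htight
    (fun n ↦ hG.comp (hFn n)) (hG.comp hF) (fun _ _ ↦ hC _) (fun _ ↦ hC _)
    fun K hK ↦ hG.comp_tendstoUniformlyOn_of_isCompact hK hF.continuousOn (hconv K hK)
  simpa using hdiff.add (hweak _ (hG.comp hF) ⟨C, fun _ ↦ hC _⟩)

theorem stmt8 {Ω : Type*} [MeasurableSpace Ω] (P : Measure Ω) [IsProbabilityMeasure P]
    {𝒳 : Type*} [NormedAddCommGroup 𝒳] [NormedSpace ℝ 𝒳] [CompleteSpace 𝒳]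
    [TopologicalSpace.SeparableSpace 𝒳] [MeasurableSpace 𝒳] [BorelSpace 𝒳]
    (X : ℕ → Ω → 𝒳) (Y : Ω → 𝒳)
    (hX : ∀ n, Measurable (X n)) (hY : Measurable Y)
    (hweak : ∀ G : 𝒳 → ℝ, Continuous G → (∃ C, ∀ x, |G x| ≤ C) →
      Filter.Tendsto (fun n => ∫ ω, G (X n ω) ∂P) Filter.atTop (nhds (∫ ω, G (Y ω) ∂P)))
    (htight : ∀ ε > (0 : ℝ), ∃ K : Set 𝒳, IsCompact K ∧
      ∀ n, (P {ω | X n ω ∉ K}).toReal ≤ ε)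
    (F : ℕ → 𝒳 → ℝ) (Flim : 𝒳 → ℝ)
    (hFn : ∀ n, Continuous (F n)) (hF : Continuous Flim)
    (hconv : ∀ K : Set 𝒳, IsCompact K → TendstoUniformlyOn F Flim Filter.atTop K) :
    ∀ G : ℝ → ℝ, Continuous G → (∃ C, ∀ x, |G x| ≤ C) →
      Filter.Tendsto (fun n => ∫ ω, G (F n (X n ω)) ∂P) Filter.atTop
        (nhds (∫ ω, G (Flim (Y ω)) ∂P)) :=
  stmt8_general P X Y hX hweak htight F Flim hFn hF hconv
end
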